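/- arXiv:math/0503225 — 2 statements merged into one kernel-verified Lean document; each statement's English description precedes it below -/
import Mathlib

section
/- Let V be a finite-dimensional real vector space with a nondegenerate alternating bilinear form ω, and let V = E_s ⊕ E_c ⊕ E_u be a direct sum decomposition. Suppose T : V → V is a linear isomorphism preserving ω (ω(Tv, Tw) = ω(v,w) for all v,w) and preserving each summand, and there exist constants λ > τ ≥ 1 with ‖T v‖ ≥ λ‖v‖ for v ∈ E_u, τ^{-1}‖v‖ ≤ ‖T v‖ ≤ τ‖v‖ for v ∈ E_c, and ‖T v‖ ≤ λ^{-1}‖v‖ for v ∈ E_s (with respect to some norm on V). Then the restriction of ω to E_c is nondegenerate. -/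
/-!
The form is preserved by `T`, so `ω u v = ω (Tⁿ u) (Tⁿ v)` for all `n`. For `u ∈ E_c` and
`v ∈ E_s` the right side is bounded by `C (τ/λ)ⁿ ‖u‖ ‖v‖ → 0`; for `v ∈ E_u` the same works with
`T⁻¹`, which also preserves the summands by finite-dimensionality. Hence a vector of `E_c` that is
`ω`-orthogonal to `E_c` is `ω`-orthogonal to `E_s ⊕ E_c ⊕ E_u = V`, and so vanishes.
-/

open Filter Topology Set

section Norms

variable {V : Type*} [NormedAddCommGroup V]

theorem exists_abs_apply_apply_le [NormedSpace ℝ V] [FiniteDimensional ℝ V]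
    (ω : V →ₗ[ℝ] V →ₗ[ℝ] ℝ) : ∃ C, 0 ≤ C ∧ ∀ v w, |ω v w| ≤ C * ‖v‖ * ‖w‖ := by
  let Φ : V →L[ℝ] V →L[ℝ] ℝ :=
    LinearMap.toContinuousLinearMap (LinearMap.toContinuousLinearMap.toLinearMap ∘ₗ ω)
  exact ⟨‖Φ‖, norm_nonneg Φ, fun v w => Φ.le_opNorm₂ v w⟩

theorem norm_iterate_le_of_mapsTo {f : V → V} {s : Set V} {r : ℝ} (hr : 0 ≤ r)
    (hs : MapsTo f s s) (hf : ∀ v ∈ s, ‖f v‖ ≤ r * ‖v‖) :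
    ∀ v ∈ s, ∀ n, ‖f^[n] v‖ ≤ r ^ n * ‖v‖ := by
  intro v hv n
  induction n with
  | zero => simp
  | succ n ih =>
    rw [Function.iterate_succ_apply', pow_succ', mul_assoc]
    exact (hf _ (hs.iterate n hv)).trans (mul_le_mul_of_nonneg_left ih hr)

theorem apply_eq_zero_of_norm_iterate_le (ω : V → V → ℝ) {C : ℝ} (hC0 : 0 ≤ C)
    (hC : ∀ v w, |ω v w| ≤ C * ‖v‖ * ‖w‖) {f : V → V} (hf : ∀ v w, ω (f v) (f w) = ω v w)
    {a b : ℝ} (ha : 0 ≤ a) (hb : 0 ≤ b) (hab : a * b < 1) {u w : V}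
    (hu : ∀ n, ‖f^[n] u‖ ≤ a ^ n * ‖u‖) (hw : ∀ n, ‖f^[n] w‖ ≤ b ^ n * ‖w‖) : ω u w = 0 := by
  have hiter : ∀ n, ω (f^[n] u) (f^[n] w) = ω u w := by
    intro n
    induction n with
    | zero => rfl
    | succ n ih => rw [Function.iterate_succ_apply', Function.iterate_succ_apply', hf, ih]
  have hbound : ∀ n, |ω u w| ≤ C * ‖u‖ * ‖w‖ * (a * b) ^ n := fun n =>
    calc |ω u w| = |ω (f^[n] u) (f^[n] w)| := by rw [hiter]
      _ ≤ C * ‖f^[n] u‖ * ‖f^[n] w‖ := hC _ _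
      _ ≤ C * (a ^ n * ‖u‖) * (b ^ n * ‖w‖) := by gcongr; exacts [hu n, hw n]
      _ = C * ‖u‖ * ‖w‖ * (a * b) ^ n := by ring
  have hlim : Tendsto (fun n => C * ‖u‖ * ‖w‖ * (a * b) ^ n) atTop (𝓝 0) := by
    simpa using (tendsto_pow_atTop_nhds_zero_of_lt_one (by positivity) hab).const_mul
      (C * ‖u‖ * ‖w‖)
  exact abs_nonpos_iff.mp (ge_of_tendsto' hlim hbound)

theorem LinearEquiv.norm_symm_le_of_mul_norm_le [NormedSpace ℝ V] (T : V ≃ₗ[ℝ] V)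
    {s : Set V} (hs : MapsTo T.symm s s) {c : ℝ} (hc : 0 < c)
    (hT : ∀ v ∈ s, c * ‖v‖ ≤ ‖T v‖) : ∀ v ∈ s, ‖T.symm v‖ ≤ c⁻¹ * ‖v‖ := by
  intro v hv
  rw [inv_mul_eq_div, le_div_iff₀ hc, mul_comm]
  simpa using hT _ (hs hv)

end Norms

theorem LinearEquiv.mapsTo_symm_of_mapsTo {K V : Type*} [Field K] [AddCommGroup V] [Module K V]
    [FiniteDimensional K V] (T : V ≃ₗ[K] V) {E : Submodule K V} (h : MapsTo T E E) :
    MapsTo T.symm E E := by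
  have hmap : E.map (T : V →ₗ[K] V) = E :=
    Submodule.eq_of_le_of_finrank_le (Submodule.map_le_iff_le_comap.mpr fun v hv => h hv)
      (T.finrank_map_eq E).ge
  intro v hv
  rw [← hmap] at hv
  obtain ⟨x, hx, rfl⟩ := hv
  simpa using hx

theorem stmt_0_general {V : Type*} [NormedAddCommGroup V] [NormedSpace ℝ V]
    [FiniteDimensional ℝ V]
    (ω : V →ₗ[ℝ] V →ₗ[ℝ] ℝ)
    (hnd : ∀ v : V, (∀ w : V, ω v w = 0) → v = 0)
    (Es Ec Eu : Submodule ℝ V)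
    (hsplit : DirectSum.IsInternal ![Es, Ec, Eu])
    (T : V ≃ₗ[ℝ] V)
    (hω : ∀ v w : V, ω (T v) (T w) = ω v w)
    (hTs : ∀ v ∈ Es, T v ∈ Es) (hTc : ∀ v ∈ Ec, T v ∈ Ec)
    (hTu : ∀ v ∈ Eu, T v ∈ Eu)
    (lam tau : ℝ) (htau : 1 ≤ tau) (hlt : tau < lam)
    (hu : ∀ v ∈ Eu, lam * ‖v‖ ≤ ‖T v‖)
    (hc : ∀ v ∈ Ec, tau⁻¹ * ‖v‖ ≤ ‖T v‖ ∧ ‖T v‖ ≤ tau * ‖v‖)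
    (hs : ∀ v ∈ Es, ‖T v‖ ≤ lam⁻¹ * ‖v‖) :
    ∀ u ∈ Ec, (∀ w ∈ Ec, ω u w = 0) → u = 0 := by
  intro u huc horth
  obtain ⟨C, hC0, hC⟩ := exists_abs_apply_apply_le ω
  have htau0 : 0 < tau := by linarith
  have hlam0 : 0 < lam := by linarith
  have hrate : tau * lam⁻¹ < 1 := by rwa [← div_eq_mul_inv, div_lt_one hlam0]
  have hTc' : MapsTo T.symm Ec Ec := T.mapsTo_symm_of_mapsTo hTc
  have hTu' : MapsTo T.symm Eu Eu := T.mapsTo_symm_of_mapsTo hTu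
  have hω' : ∀ v w, ω (T.symm v) (T.symm w) = ω v w := fun v w => by
    rw [← hω, T.apply_symm_apply, T.apply_symm_apply]
  have horth_s : ∀ w ∈ Es, ω u w = 0 := fun w hw =>
    apply_eq_zero_of_norm_iterate_le (ω · ·) hC0 hC hω htau0.le (inv_pos.mpr hlam0).le hrate
      (norm_iterate_le_of_mapsTo htau0.le hTc (fun v hv => (hc v hv).2) u huc)
      (norm_iterate_le_of_mapsTo (inv_pos.mpr hlam0).le hTs hs w hw)
  have horth_u : ∀ w ∈ Eu, ω u w = 0 := by
    have hc' := T.norm_symm_le_of_mul_norm_le hTc' (inv_pos.mpr htau0) fun v hv => (hc v hv).1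
    rw [inv_inv] at hc'
    exact fun w hw =>
      apply_eq_zero_of_norm_iterate_le (ω · ·) hC0 hC hω' htau0.le (inv_pos.mpr hlam0).le hrate
        (norm_iterate_le_of_mapsTo htau0.le hTc' hc' u huc)
        (norm_iterate_le_of_mapsTo (inv_pos.mpr hlam0).le hTu'
          (T.norm_symm_le_of_mul_norm_le hTu' hlam0 hu) w hw)
  have hker : LinearMap.ker (ω u) = ⊤ := by
    rw [eq_top_iff, ← hsplit.submodule_iSup_eq_top, iSup_le_iff]
    intro i w hw
    fin_cases i
    exacts [horth_s w hw, horth w hw, horth_u w hw]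
  exact hnd u fun w => LinearMap.mem_ker.mp (hker ▸ Submodule.mem_top)

theorem stmt_0 {V : Type*} [NormedAddCommGroup V] [NormedSpace ℝ V]
    [FiniteDimensional ℝ V]
    (ω : V →ₗ[ℝ] V →ₗ[ℝ] ℝ)
    (hnd : ∀ v : V, (∀ w : V, ω v w = 0) → v = 0)
    (halt : ∀ v : V, ω v v = 0)
    (Es Ec Eu : Submodule ℝ V)
    (hsplit : DirectSum.IsInternal ![Es, Ec, Eu])
    (T : V ≃ₗ[ℝ] V)
    (hω : ∀ v w : V, ω (T v) (T w) = ω v w)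
    (hTs : ∀ v ∈ Es, T v ∈ Es) (hTc : ∀ v ∈ Ec, T v ∈ Ec)
    (hTu : ∀ v ∈ Eu, T v ∈ Eu)
    (lam tau : ℝ) (htau : 1 ≤ tau) (hlt : tau < lam)
    (hu : ∀ v ∈ Eu, lam * ‖v‖ ≤ ‖T v‖)
    (hc : ∀ v ∈ Ec, tau⁻¹ * ‖v‖ ≤ ‖T v‖ ∧ ‖T v‖ ≤ tau * ‖v‖)
    (hs : ∀ v ∈ Es, ‖T v‖ ≤ lam⁻¹ * ‖v‖) :
    ∀ u ∈ Ec, (∀ w ∈ Ec, ω u w = 0) → u = 0 :=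
  stmt_0_general ω hnd Es Ec Eu hsplit T hω hTs hTc hTu lam tau htau hlt hu hc hs
end

section
/- Let A : V → V be a linear isomorphism of a finite-dimensional normed real vector space admitting an invariant splitting V = E_s ⊕ E_c ⊕ E_u with constants λ₁ > λ₂ > 1 > μ₂ > μ₁ > 0 as in the definition of partial hyperbolicity (‖Av‖ ≥ λ₁‖v‖ on E_u, μ₂‖v‖ ≤ ‖Av‖ ≤ λ₂‖v‖ on E_c, ‖Av‖ ≤ μ₁‖v‖ on E_s). Then the splitting is unique: if V = F_s ⊕ F_c ⊕ F_u is another A-invariant splitting satisfying the same inequalities with the same constants, then F_s = E_s, F_c = E_c, and F_u = E_u. -/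
/-!
Each piece of a partially hyperbolic splitting is determined by `A` alone, through the growth
rate of orbits: `E_s` consists of the vectors whose forward orbit is `O(μ₁ⁿ)`, `E_s ⊕ E_c` of
those whose forward orbit is `O(λ₂ⁿ)`, and symmetrically for `A⁻¹`, which gives `E_u` and
`E_c ⊕ E_u`; finally `E_c = (E_s ⊕ E_c) ∩ (E_c ⊕ E_u)`. The key point is that a vector whose
orbit grows slower than the expansion rate of an invariant summand `p` has zero `p`-component,
because the projection onto `p` along an invariant complement commutes with `A` and is bounded.
-/

open Module

theorem sup_inf_sup_eq_left_of_disjoint {α : Type*} [Lattice α] [OrderBot α] [IsModularLattice α]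
    {x y z : α} (h : Disjoint y (x ⊔ z)) : (x ⊔ y) ⊓ (x ⊔ z) = x := by
  rw [sup_inf_assoc_of_le y le_sup_left, h.eq_bot, sup_bot_eq]

theorem eq_zero_of_mul_pow_le_mul_pow {x C r R : ℝ} (hx : 0 ≤ x) (hr : 0 < r) (hrR : r < R)
    (h : ∀ n : ℕ, x * R ^ n ≤ C * r ^ n) : x = 0 := by
  by_contra hne
  have hx0 : 0 < x := hx.lt_of_ne' hne
  obtain ⟨n, hn⟩ := pow_unbounded_of_one_lt (C / x) ((one_lt_div hr).2 hrR)
  rw [div_pow, div_lt_div_iff₀ hx0 (pow_pos hr n)] at hn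
  linarith [h n]

theorem LinearEquiv.symm_mem_invtSubmodule {K V : Type*} [Field K] [AddCommGroup V] [Module K V]
    [FiniteDimensional K V] {A : V ≃ₗ[K] V} {S : Submodule K V}
    (hS : S ∈ End.invtSubmodule (A : End K V)) : S ∈ End.invtSubmodule (A.symm : End K V) := by
  rw [End.mem_invtSubmodule_symm_iff_le_map]
  exact (Submodule.eq_of_le_of_finrank_eq ((End.mem_invtSubmodule_iff_map_le _).1 hS)
    (A.finrank_map_eq S)).ge

theorem DirectSum.IsInternal.isCompl_fin_three {R M : Type*} [Ring R] [AddCommGroup M]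
    [Module R M] {a b c : Submodule R M} (h : DirectSum.IsInternal ![a, b, c]) :
    IsCompl a (b ⊔ c) ∧ IsCompl b (a ⊔ c) ∧ IsCompl c (a ⊔ b) := by
  obtain ⟨ha, hb, hc⟩ := iSupIndep_fin_three.1 h.submodule_iSupIndep
  have htop : a ⊔ b ⊔ c = ⊤ := by simpa using h.submodule_iSup_eq_top
  simp only [Matrix.cons_val_zero, Matrix.cons_val_one, Matrix.cons_val_two, Matrix.head_cons,
    Matrix.tail_cons] at ha hb hc
  refine ⟨⟨ha, codisjoint_iff.2 ?_⟩, ⟨sup_comm c a ▸ hb, codisjoint_iff.2 ?_⟩,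
    ⟨hc, codisjoint_iff.2 ?_⟩⟩
  all_goals rw [← htop]; ac_rfl

section Growth

variable {V : Type*} [NormedAddCommGroup V] [NormedSpace ℝ V]

def growthSubmodule (T : End ℝ V) (r : ℝ) : Submodule ℝ V where
  carrier := {v | ∃ C, ∀ n : ℕ, ‖(T ^ n) v‖ ≤ C * r ^ n}
  add_mem' := by
    rintro v w ⟨C, hC⟩ ⟨D, hD⟩
    refine ⟨C + D, fun n => ?_⟩
    rw [map_add]
    linarith [norm_add_le ((T ^ n) v) ((T ^ n) w), hC n, hD n]
  zero_mem' := ⟨0, fun n => by simp⟩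
  smul_mem' := by
    rintro c v ⟨C, hC⟩
    refine ⟨‖c‖ * C, fun n => ?_⟩
    rw [map_smul, norm_smul, mul_assoc]
    exact mul_le_mul_of_nonneg_left (hC n) (norm_nonneg c)

variable {T : End ℝ V} {S : Submodule ℝ V} {r R : ℝ}

theorem growthSubmodule_mono {s : ℝ} (hr : 0 ≤ r) (hrs : r ≤ s) :
    growthSubmodule T r ≤ growthSubmodule T s := by
  rintro v ⟨C, hC⟩
  have hC0 : 0 ≤ C := by simpa using (norm_nonneg v).trans (hC 0)
  exact ⟨C, fun n => (hC n).trans (mul_le_mul_of_nonneg_left (pow_le_pow_left₀ hr hrs n) hC0)⟩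

theorem pow_apply_mem_of_mem_invtSubmodule (hS : S ∈ End.invtSubmodule T) {v : V} (hv : v ∈ S)
    (n : ℕ) : (T ^ n) v ∈ S := by
  rw [End.coe_pow]
  exact ((End.mem_invtSubmodule_iff_mapsTo T).1 hS).iterate n hv

theorem norm_pow_apply_le (hS : S ∈ End.invtSubmodule T) (hr : 0 ≤ r)
    (hT : ∀ v ∈ S, ‖T v‖ ≤ r * ‖v‖) {v : V} (hv : v ∈ S) (n : ℕ) :
    ‖(T ^ n) v‖ ≤ ‖v‖ * r ^ n := by
  induction n with
  | zero => simp
  | succ n ih =>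
    rw [pow_succ' T, End.mul_apply]
    calc ‖T ((T ^ n) v)‖ ≤ r * ‖(T ^ n) v‖ := hT _ (pow_apply_mem_of_mem_invtSubmodule hS hv n)
      _ ≤ r * (‖v‖ * r ^ n) := mul_le_mul_of_nonneg_left ih hr
      _ = ‖v‖ * r ^ (n + 1) := by ring

theorem le_norm_pow_apply (hS : S ∈ End.invtSubmodule T) (hR : 0 ≤ R)
    (hT : ∀ v ∈ S, R * ‖v‖ ≤ ‖T v‖) {v : V} (hv : v ∈ S) (n : ℕ) :
    ‖v‖ * R ^ n ≤ ‖(T ^ n) v‖ := by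
  induction n with
  | zero => simp
  | succ n ih =>
    rw [pow_succ' T, End.mul_apply]
    calc ‖v‖ * R ^ (n + 1) = R * (‖v‖ * R ^ n) := by ring
      _ ≤ R * ‖(T ^ n) v‖ := mul_le_mul_of_nonneg_left ih hR
      _ ≤ ‖T ((T ^ n) v)‖ := hT _ (pow_apply_mem_of_mem_invtSubmodule hS hv n)

theorem le_growthSubmodule (hS : S ∈ End.invtSubmodule T) (hr : 0 ≤ r)
    (hT : ∀ v ∈ S, ‖T v‖ ≤ r * ‖v‖) : S ≤ growthSubmodule T r :=
  fun v hv => ⟨‖v‖, norm_pow_apply_le hS hr hT hv⟩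

theorem disjoint_growthSubmodule (hS : S ∈ End.invtSubmodule T) (hr : 0 < r) (hrR : r < R)
    (hT : ∀ v ∈ S, R * ‖v‖ ≤ ‖T v‖) : Disjoint S (growthSubmodule T r) := by
  rw [Submodule.disjoint_def]
  rintro v hv ⟨C, hC⟩
  exact norm_eq_zero.1 <| eq_zero_of_mul_pow_le_mul_pow (norm_nonneg v) hr hrR fun n =>
    (le_norm_pow_apply hS (hr.trans hrR).le hT hv n).trans (hC n)

variable [FiniteDimensional ℝ V]

theorem growthSubmodule_mem_invtSubmodule {f : End ℝ V} (hf : Commute f T) :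
    growthSubmodule T r ∈ End.invtSubmodule f := by
  rintro v ⟨C, hC⟩
  let F := LinearMap.toContinuousLinearMap f
  refine ⟨‖F‖ * C, fun n => ?_⟩
  calc ‖(T ^ n) (f v)‖ = ‖F ((T ^ n) v)‖ := by
        rw [← End.mul_apply, ← (hf.pow_right n).eq]; rfl
    _ ≤ ‖F‖ * ‖(T ^ n) v‖ := F.le_opNorm _
    _ ≤ ‖F‖ * (C * r ^ n) := mul_le_mul_of_nonneg_left (hC n) (norm_nonneg F)
    _ = ‖F‖ * C * r ^ n := by ring

theorem growthSubmodule_le_of_isCompl {p q : Submodule ℝ V} (hpq : IsCompl p q)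
    (hp : p ∈ End.invtSubmodule T) (hq : q ∈ End.invtSubmodule T) (hr : 0 < r) (hrR : r < R)
    (hT : ∀ v ∈ p, R * ‖v‖ ≤ ‖T v‖) : growthSubmodule T r ≤ q := by
  intro v hv
  have hcomm : Commute (p.projection q hpq) T :=
    (LinearMap.IsIdempotentElem.commute_iff (Submodule.isIdempotentElem_projection hpq)).2
      ⟨by rwa [Submodule.range_projection], by rwa [Submodule.ker_projection]⟩
  rw [← Submodule.projection_apply_eq_zero_iff hpq]
  exact Submodule.disjoint_def.1 (disjoint_growthSubmodule hp hr hrR hT) _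
    (Submodule.projection_apply_mem hpq v) (growthSubmodule_mem_invtSubmodule hcomm hv)

end Growth

section PartiallyHyperbolic

variable {V : Type*} [NormedAddCommGroup V] [NormedSpace ℝ V]

theorem le_norm_symm_apply {A : V ≃ₗ[ℝ] V} {S : Submodule ℝ V} {r : ℝ}
    (hS : S ∈ End.invtSubmodule (A.symm : End ℝ V)) (hr : 0 < r)
    (hA : ∀ v ∈ S, ‖A v‖ ≤ r * ‖v‖) : ∀ v ∈ S, r⁻¹ * ‖v‖ ≤ ‖A.symm v‖ := by
  intro v hv
  rw [inv_mul_le_iff₀ hr]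
  simpa using hA _ (hS hv)

theorem norm_symm_apply_le {A : V ≃ₗ[ℝ] V} {S : Submodule ℝ V} {r : ℝ}
    (hS : S ∈ End.invtSubmodule (A.symm : End ℝ V)) (hr : 0 < r)
    (hA : ∀ v ∈ S, r * ‖v‖ ≤ ‖A v‖) : ∀ v ∈ S, ‖A.symm v‖ ≤ r⁻¹ * ‖v‖ := by
  intro v hv
  rw [le_inv_mul_iff₀ hr]
  simpa using hA _ (hS hv)

/-- The splitting `V = Es ⊕ Ec ⊕ Eu` is encoded by the complementarity of each piece with the sum
of the other two. -/
structure IsPartiallyHyperbolicSplitting (A : V ≃ₗ[ℝ] V) (lam₁ lam₂ mu₂ mu₁ : ℝ)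
    (Es Ec Eu : Submodule ℝ V) : Prop where
  lam₂_lt_lam₁ : lam₂ < lam₁
  one_lt_lam₂ : 1 < lam₂
  mu₂_lt_one : mu₂ < 1
  mu₁_lt_mu₂ : mu₁ < mu₂
  mu₁_pos : 0 < mu₁
  isCompl_s : IsCompl Es (Ec ⊔ Eu)
  isCompl_c : IsCompl Ec (Es ⊔ Eu)
  isCompl_u : IsCompl Eu (Es ⊔ Ec)
  invt_s : Es ∈ End.invtSubmodule (A : End ℝ V)
  invt_c : Ec ∈ End.invtSubmodule (A : End ℝ V)
  invt_u : Eu ∈ End.invtSubmodule (A : End ℝ V)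
  expand_u : ∀ v ∈ Eu, lam₁ * ‖v‖ ≤ ‖A v‖
  expand_c : ∀ v ∈ Ec, mu₂ * ‖v‖ ≤ ‖A v‖
  contract_c : ∀ v ∈ Ec, ‖A v‖ ≤ lam₂ * ‖v‖
  contract_s : ∀ v ∈ Es, ‖A v‖ ≤ mu₁ * ‖v‖

namespace IsPartiallyHyperbolicSplitting

variable {A : V ≃ₗ[ℝ] V} {lam₁ lam₂ mu₂ mu₁ : ℝ} {Es Ec Eu : Submodule ℝ V}

theorem center_eq (h : IsPartiallyHyperbolicSplitting A lam₁ lam₂ mu₂ mu₁ Es Ec Eu) :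
    Ec = (Es ⊔ Ec) ⊓ (Ec ⊔ Eu) := by
  rw [sup_comm Es Ec, sup_inf_sup_eq_left_of_disjoint h.isCompl_s.disjoint]

variable [FiniteDimensional ℝ V]

theorem stable_eq (h : IsPartiallyHyperbolicSplitting A lam₁ lam₂ mu₂ mu₁ Es Ec Eu) :
    Es = growthSubmodule A mu₁ := by
  have hmu₁_lt_lam₁ : mu₁ < lam₁ := by
    linarith [h.lam₂_lt_lam₁, h.one_lt_lam₂, h.mu₂_lt_one, h.mu₁_lt_mu₂]
  refine le_antisymm (le_growthSubmodule h.invt_s h.mu₁_pos.le h.contract_s) ?_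
  rw [← sup_inf_sup_eq_left_of_disjoint h.isCompl_c.disjoint]
  exact le_inf
    (growthSubmodule_le_of_isCompl h.isCompl_u h.invt_u (End.invtSubmodule.sup_mem h.invt_s h.invt_c) h.mu₁_pos
      hmu₁_lt_lam₁ h.expand_u)
    (growthSubmodule_le_of_isCompl h.isCompl_c h.invt_c (End.invtSubmodule.sup_mem h.invt_s h.invt_u) h.mu₁_pos
      h.mu₁_lt_mu₂ h.expand_c)

theorem sup_stable_center_eq (h : IsPartiallyHyperbolicSplitting A lam₁ lam₂ mu₂ mu₁ Es Ec Eu) :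
    Es ⊔ Ec = growthSubmodule A lam₂ := by
  have hlam₂_pos : 0 < lam₂ := zero_lt_one.trans h.one_lt_lam₂
  have hmu₁_le_lam₂ : mu₁ ≤ lam₂ := by
    linarith [h.one_lt_lam₂, h.mu₂_lt_one, h.mu₁_lt_mu₂]
  refine le_antisymm (sup_le ?_ (le_growthSubmodule h.invt_c hlam₂_pos.le h.contract_c)) ?_
  · exact h.stable_eq.le.trans (growthSubmodule_mono h.mu₁_pos.le hmu₁_le_lam₂)
  · exact growthSubmodule_le_of_isCompl h.isCompl_u h.invt_u (End.invtSubmodule.sup_mem h.invt_s h.invt_c) hlam₂_pos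
      h.lam₂_lt_lam₁ h.expand_u

theorem symm (h : IsPartiallyHyperbolicSplitting A lam₁ lam₂ mu₂ mu₁ Es Ec Eu) :
    IsPartiallyHyperbolicSplitting A.symm mu₁⁻¹ mu₂⁻¹ lam₂⁻¹ lam₁⁻¹ Eu Ec Es := by
  have hmu₂_pos : 0 < mu₂ := h.mu₁_pos.trans h.mu₁_lt_mu₂
  have hlam₂_pos : 0 < lam₂ := zero_lt_one.trans h.one_lt_lam₂
  have hsymm_s := LinearEquiv.symm_mem_invtSubmodule h.invt_s
  have hsymm_c := LinearEquiv.symm_mem_invtSubmodule h.invt_c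
  have hsymm_u := LinearEquiv.symm_mem_invtSubmodule h.invt_u
  exact
    { lam₂_lt_lam₁ := inv_strictAnti₀ h.mu₁_pos h.mu₁_lt_mu₂
      one_lt_lam₂ := (one_lt_inv₀ hmu₂_pos).2 h.mu₂_lt_one
      mu₂_lt_one := inv_lt_one_of_one_lt₀ h.one_lt_lam₂
      mu₁_lt_mu₂ := inv_strictAnti₀ hlam₂_pos h.lam₂_lt_lam₁
      mu₁_pos := inv_pos.2 (hlam₂_pos.trans h.lam₂_lt_lam₁)
      isCompl_s := sup_comm Es Ec ▸ h.isCompl_u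
      isCompl_c := sup_comm Es Eu ▸ h.isCompl_c
      isCompl_u := sup_comm Ec Eu ▸ h.isCompl_s
      invt_s := hsymm_u
      invt_c := hsymm_c
      invt_u := hsymm_s
      expand_u := le_norm_symm_apply hsymm_s h.mu₁_pos h.contract_s
      expand_c := le_norm_symm_apply hsymm_c hlam₂_pos h.contract_c
      contract_c := norm_symm_apply_le hsymm_c hmu₂_pos h.expand_c
      contract_s := norm_symm_apply_le hsymm_u (hlam₂_pos.trans h.lam₂_lt_lam₁) h.expand_u }

theorem unstable_eq (h : IsPartiallyHyperbolicSplitting A lam₁ lam₂ mu₂ mu₁ Es Ec Eu) :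
    Eu = growthSubmodule A.symm lam₁⁻¹ :=
  h.symm.stable_eq

theorem center_sup_unstable_eq (h : IsPartiallyHyperbolicSplitting A lam₁ lam₂ mu₂ mu₁ Es Ec Eu) :
    Ec ⊔ Eu = growthSubmodule A.symm mu₂⁻¹ := by
  rw [sup_comm]
  exact h.symm.sup_stable_center_eq

theorem unique {Fs Fc Fu : Submodule ℝ V}
    (hE : IsPartiallyHyperbolicSplitting A lam₁ lam₂ mu₂ mu₁ Es Ec Eu)
    (hF : IsPartiallyHyperbolicSplitting A lam₁ lam₂ mu₂ mu₁ Fs Fc Fu) :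
    Fs = Es ∧ Fc = Ec ∧ Fu = Eu := by
  refine ⟨by rw [hE.stable_eq, hF.stable_eq], ?_, by rw [hE.unstable_eq, hF.unstable_eq]⟩
  rw [hE.center_eq, hF.center_eq, hE.sup_stable_center_eq, hF.sup_stable_center_eq,
    hE.center_sup_unstable_eq, hF.center_sup_unstable_eq]

end IsPartiallyHyperbolicSplitting

end PartiallyHyperbolic

theorem stmt_7 {V : Type*} [NormedAddCommGroup V] [NormedSpace ℝ V]
    [FiniteDimensional ℝ V]
    (A : V ≃ₗ[ℝ] V)
    (lam₁ lam₂ mu₂ mu₁ : ℝ)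
    (h1 : lam₂ < lam₁) (h2 : 1 < lam₂) (h3 : mu₂ < 1) (h4 : mu₁ < mu₂) (h5 : 0 < mu₁)
    (Es Ec Eu : Submodule ℝ V)
    (hsplit : DirectSum.IsInternal ![Es, Ec, Eu])
    (hAs : ∀ v ∈ Es, A v ∈ Es) (hAc : ∀ v ∈ Ec, A v ∈ Ec)
    (hAu : ∀ v ∈ Eu, A v ∈ Eu)
    (hu : ∀ v ∈ Eu, lam₁ * ‖v‖ ≤ ‖A v‖)
    (hc : ∀ v ∈ Ec, mu₂ * ‖v‖ ≤ ‖A v‖ ∧ ‖A v‖ ≤ lam₂ * ‖v‖)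
    (hs : ∀ v ∈ Es, ‖A v‖ ≤ mu₁ * ‖v‖)
    (Fs Fc Fu : Submodule ℝ V)
    (hsplit' : DirectSum.IsInternal ![Fs, Fc, Fu])
    (hAs' : ∀ v ∈ Fs, A v ∈ Fs) (hAc' : ∀ v ∈ Fc, A v ∈ Fc)
    (hAu' : ∀ v ∈ Fu, A v ∈ Fu)
    (hu' : ∀ v ∈ Fu, lam₁ * ‖v‖ ≤ ‖A v‖)
    (hc' : ∀ v ∈ Fc, mu₂ * ‖v‖ ≤ ‖A v‖ ∧ ‖A v‖ ≤ lam₂ * ‖v‖)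
    (hs' : ∀ v ∈ Fs, ‖A v‖ ≤ mu₁ * ‖v‖) :
    Fs = Es ∧ Fc = Ec ∧ Fu = Eu := by
  obtain ⟨hEs, hEc, hEu⟩ := hsplit.isCompl_fin_three
  obtain ⟨hFs, hFc, hFu⟩ := hsplit'.isCompl_fin_three
  have hE : IsPartiallyHyperbolicSplitting A lam₁ lam₂ mu₂ mu₁ Es Ec Eu :=
    ⟨h1, h2, h3, h4, h5, hEs, hEc, hEu, hAs, hAc, hAu, hu, fun v hv => (hc v hv).1,
      fun v hv => (hc v hv).2, hs⟩
  have hF : IsPartiallyHyperbolicSplitting A lam₁ lam₂ mu₂ mu₁ Fs Fc Fu :=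
    ⟨h1, h2, h3, h4, h5, hFs, hFc, hFu, hAs', hAc', hAu', hu', fun v hv => (hc' v hv).1,
      fun v hv => (hc' v hv).2, hs'⟩
  exact hE.unique hF
end
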